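/- arXiv:2602.11383 — 2 statements merged into one kernel-verified Lean document; each statement's English description precedes it below -/
import Mathlib

section
/- (Convergence of WSBD-SGD.) Let C : ℝ^d → ℝ be L-smooth and bounded below by C*. Let (F_t)_{t≥0} be a filtration, let (θ^t)_{t≥0} be random vectors in ℝ^d with θ^t F_t-measurable and C(θ^t) and ‖∇C(θ^t)‖² integrable for every t, and let (δ^t)_{t≥0} be random freezing masks satisfying E[δ^t_k | F_t] ≥ p_min almost surely for every coordinate k, with p_min > 0. Suppose θ^{t+1} = θ^t − η (δ^t ⊙ ∇C(θ^t)) almost surely, where η > 0 satisfies p_min > Lη/2. Then the expected squared gradient norms converge to zero on average: lim_{T→∞} (1/T) Σ_{t=0}^{T−1} E[‖∇C(θ^t)‖²] = 0. -/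
open MeasureTheory Filter

/-!
By the descent lemma for an `L`-smooth `C`, and since `δₖ² = δₖ` for a mask, one step gives
`C(θ^{t+1}) ≤ C(θ^t) - (η - Lη²/2) ∑ₖ δₖ (∂ₖC(θ^t))²`. The factor `(∂ₖC(θ^t))²` is
`ℱ_t`-measurable, so it can be pulled out of `E[· | ℱ_t]`, and the assumption on the masks yields
`E[δₖ (∂ₖC(θ^t))²] ≥ p_min E[(∂ₖC(θ^t))²]`. Hence `E C(θ^t)` decreases by at least
`(η - Lη²/2) p_min E‖∇C(θ^t)‖²` per step, a positive multiple because `p_min ≤ 1`. Since `C ≥ C*`,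
telescoping bounds the partial sums of `E‖∇C(θ^t)‖²`, so their averages are `O(1/T)`.
-/

open Finset
open scoped InnerProductSpace

section Descent

variable {E : Type*} [NormedAddCommGroup E] [InnerProductSpace ℝ E] [CompleteSpace E]
  {f : E → ℝ} {L : ℝ}

theorem le_add_inner_gradient_add_sq_of_lipschitz_gradient (hf : Differentiable ℝ f)
    (hlip : ∀ x y, ‖gradient f x - gradient f y‖ ≤ L * ‖x - y‖) (x y : E) :
    f y ≤ f x + ⟪gradient f x, y - x⟫_ℝ + L / 2 * ‖y - x‖ ^ 2 := by
  set v := y - x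
  let φ : ℝ → ℝ := fun s => f (x + s • v) - s * ⟪gradient f x, v⟫_ℝ - L / 2 * s ^ 2 * ‖v‖ ^ 2
  let φ' : ℝ → ℝ := fun s =>
    ⟪gradient f (x + s • v), v⟫_ℝ - ⟪gradient f x, v⟫_ℝ - L * s * ‖v‖ ^ 2
  have hφ : ∀ s, HasDerivAt φ (φ' s) s := by
    intro s
    have hline : HasDerivAt (fun s : ℝ => x + s • v) v s := by
      simpa using ((hasDerivAt_id s).smul_const v).const_add x
    have hfline := (hf (x + s • v)).hasGradientAt.hasFDerivAt.comp_hasDerivAt s hline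
    refine ((hfline.sub ((hasDerivAt_id s).mul_const _)).sub
      (((hasDerivAt_pow 2 s).const_mul (L / 2)).mul_const (‖v‖ ^ 2))).congr_deriv ?_
    simp only [φ', InnerProductSpace.toDual_apply_apply]
    ring
  have hφ'_nonpos : ∀ s, 0 ≤ s → φ' s ≤ 0 := by
    intro s hs
    calc φ' s = ⟪gradient f (x + s • v) - gradient f x, v⟫_ℝ - L * s * ‖v‖ ^ 2 := by
          rw [inner_sub_left]
      _ ≤ ‖gradient f (x + s • v) - gradient f x‖ * ‖v‖ - L * s * ‖v‖ ^ 2 := by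
          gcongr
          exact real_inner_le_norm _ _
      _ ≤ L * ‖s • v‖ * ‖v‖ - L * s * ‖v‖ ^ 2 := by
          gcongr
          simpa using hlip (x + s • v) x
      _ = 0 := by
          rw [norm_smul, Real.norm_of_nonneg hs]
          ring
  have hanti : AntitoneOn φ (Set.Ici 0) :=
    antitoneOn_of_hasDerivWithinAt_nonpos (convex_Ici 0)
      (fun s _ => (hφ s).continuousAt.continuousWithinAt) (fun s _ => (hφ s).hasDerivWithinAt)
      (fun s hs => hφ'_nonpos s (by simp at hs; exact hs.le))
  have h01 := hanti Set.self_mem_Ici (Set.mem_Ici.2 zero_le_one) zero_le_one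
  simp only [φ, v, one_smul, zero_smul, add_zero, add_sub_cancel] at h01
  linarith

theorem apply_sub_smul_le_of_inner_gradient_eq_norm_sq (hf : Differentiable ℝ f)
    (hlip : ∀ x y, ‖gradient f x - gradient f y‖ ≤ L * ‖x - y‖) {x w : E}
    (hw : ⟪gradient f x, w⟫_ℝ = ‖w‖ ^ 2) (η : ℝ) :
    f (x - η • w) ≤ f x - (η - L * η ^ 2 / 2) * ‖w‖ ^ 2 := by
  have h := le_add_inner_gradient_add_sq_of_lipschitz_gradient hf hlip x (x - η • w)
  rw [sub_sub_cancel_left, inner_neg_right, real_inner_smul_right, hw, norm_neg, norm_smul,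
    mul_pow, Real.norm_eq_abs, sq_abs] at h
  linarith

end Descent

section Mask

variable {d : ℕ}

/-- The coordinatewise product `δ ⊙ v`. -/
def maskMul (δ : Fin d → ℝ) (v : EuclideanSpace ℝ (Fin d)) : EuclideanSpace ℝ (Fin d) :=
  (WithLp.equiv 2 (Fin d → ℝ)).symm fun k => δ k * v k

@[simp]
theorem maskMul_apply (δ : Fin d → ℝ) (v : EuclideanSpace ℝ (Fin d)) (k : Fin d) :
    maskMul δ v k = δ k * v k :=
  rfl

theorem inner_maskMul_right (δ : Fin d → ℝ) (v : EuclideanSpace ℝ (Fin d)) :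
    ⟪v, maskMul δ v⟫_ℝ = ∑ k, δ k * v k ^ 2 := by
  simp only [PiLp.inner_apply, maskMul_apply, RCLike.inner_apply, conj_trivial]
  exact sum_congr rfl fun k _ => by ring

theorem norm_maskMul_sq {δ : Fin d → ℝ} (hδ : ∀ k, δ k = 0 ∨ δ k = 1)
    (v : EuclideanSpace ℝ (Fin d)) : ‖maskMul δ v‖ ^ 2 = ∑ k, δ k * v k ^ 2 := by
  rw [EuclideanSpace.real_norm_sq_eq]
  refine sum_congr rfl fun k _ => ?_
  rcases hδ k with h | h <;> simp [h]

theorem apply_sub_smul_maskMul_gradient_le {f : EuclideanSpace ℝ (Fin d) → ℝ} {L : ℝ}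
    (hf : Differentiable ℝ f) (hlip : ∀ x y, ‖gradient f x - gradient f y‖ ≤ L * ‖x - y‖)
    {δ : Fin d → ℝ} (hδ : ∀ k, δ k = 0 ∨ δ k = 1) (x : EuclideanSpace ℝ (Fin d)) (η : ℝ) :
    f (x - η • maskMul δ (gradient f x))
      ≤ f x - (η - L * η ^ 2 / 2) * ∑ k, δ k * gradient f x k ^ 2 := by
  rw [← norm_maskMul_sq hδ]
  refine apply_sub_smul_le_of_inner_gradient_eq_norm_sq hf hlip ?_ η
  rw [inner_maskMul_right, norm_maskMul_sq hδ]

end Mask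

section Expectation

variable {Ω : Type*} {m m0 : MeasurableSpace Ω} {μ : Measure Ω}

theorem ae_norm_le_one_of_ae_eq_zero_or_one {δ : Ω → ℝ} (hδ : ∀ᵐ ω ∂μ, δ ω = 0 ∨ δ ω = 1) :
    ∀ᵐ ω ∂μ, ‖δ ω‖ ≤ 1 := by
  filter_upwards [hδ] with ω h
  rcases h with h | h <;> simp [h]

theorem le_of_le_condExp [IsProbabilityMeasure μ] (hm : m ≤ m0) {δ : Ω → ℝ} {p c : ℝ}
    (hδ : Integrable δ μ) (hδc : ∀ᵐ ω ∂μ, δ ω ≤ c) (hp : ∀ᵐ ω ∂μ, p ≤ μ[δ | m] ω) : p ≤ c :=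
  calc p = ∫ _, p ∂μ := by simp
    _ ≤ ∫ ω, μ[δ | m] ω ∂μ := integral_mono_ae (integrable_const p) integrable_condExp hp
    _ = ∫ ω, δ ω ∂μ := integral_condExp hm
    _ ≤ ∫ _, c ∂μ := integral_mono_ae hδ (integrable_const c) hδc
    _ = c := by simp

theorem mul_integral_le_integral_mul_of_le_condExp (hm : m ≤ m0) [SigmaFinite (μ.trim hm)]
    {f δ : Ω → ℝ} {p : ℝ} (hf : StronglyMeasurable[m] f) (hf0 : 0 ≤ᵐ[μ] f)
    (hfi : Integrable f μ) (hδ : Integrable δ μ) (hδf : Integrable (fun ω => δ ω * f ω) μ)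
    (hp : ∀ᵐ ω ∂μ, p ≤ μ[δ | m] ω) : p * ∫ ω, f ω ∂μ ≤ ∫ ω, δ ω * f ω ∂μ := by
  have hfδ : Integrable (f * δ) μ := by rw [mul_comm]; exact hδf
  have hpull : μ[f * δ | m] =ᵐ[μ] f * μ[δ | m] :=
    condExp_mul_of_stronglyMeasurable_left hf hfδ hδ
  calc p * ∫ ω, f ω ∂μ = ∫ ω, p * f ω ∂μ := (integral_const_mul p _).symm
    _ ≤ ∫ ω, (f * μ[δ | m]) ω ∂μ := by
        refine integral_mono_ae (hfi.const_mul p) (integrable_condExp.congr hpull) ?_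
        filter_upwards [hp, hf0] with ω hpω hfω
        simpa only [Pi.mul_apply, mul_comm (f ω)] using mul_le_mul_of_nonneg_right hpω hfω
    _ = ∫ ω, μ[f * δ | m] ω ∂μ := (integral_congr_ae hpull).symm
    _ = ∫ ω, δ ω * f ω ∂μ := by
        rw [integral_condExp hm]
        simp only [Pi.mul_apply, mul_comm]

end Expectation

section MaskedStep

variable {Ω : Type*} {m m0 : MeasurableSpace Ω} {μ : Measure Ω} {d : ℕ}
  {G : Ω → EuclideanSpace ℝ (Fin d)} {δ : Ω → Fin d → ℝ}

theorem integrable_apply_sq_of_integrable_norm_sq (hG : AEStronglyMeasurable G μ)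
    (hGi : Integrable (fun ω => ‖G ω‖ ^ 2) μ) (k : Fin d) :
    Integrable (fun ω => G ω k ^ 2) μ := by
  refine hGi.mono (((EuclideanSpace.proj k).continuous.comp_aestronglyMeasurable hG).pow 2)
    (.of_forall fun ω => ?_)
  simpa only [norm_pow, Real.norm_eq_abs, sq_abs, abs_norm]
    using pow_le_pow_left₀ (norm_nonneg _) (PiLp.norm_apply_le (G ω) k) 2

theorem integrable_mask_mul_apply_sq (hG : AEStronglyMeasurable G μ)
    (hGi : Integrable (fun ω => ‖G ω‖ ^ 2) μ)
    (hδm : ∀ k, AEStronglyMeasurable (fun ω => δ ω k) μ)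
    (h01 : ∀ k, ∀ᵐ ω ∂μ, δ ω k = 0 ∨ δ ω k = 1) (k : Fin d) :
    Integrable (fun ω => δ ω k * G ω k ^ 2) μ :=
  (integrable_apply_sq_of_integrable_norm_sq hG hGi k).bdd_mul (hδm k)
    (ae_norm_le_one_of_ae_eq_zero_or_one (h01 k))

theorem mul_integral_norm_sq_le_integral_sum_mask_mul_sq [IsFiniteMeasure μ] (hm : m ≤ m0)
    {p : ℝ} (hG : StronglyMeasurable[m] G) (hGi : Integrable (fun ω => ‖G ω‖ ^ 2) μ)
    (hδm : ∀ k, AEStronglyMeasurable (fun ω => δ ω k) μ)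
    (h01 : ∀ k, ∀ᵐ ω ∂μ, δ ω k = 0 ∨ δ ω k = 1)
    (hp : ∀ k, ∀ᵐ ω ∂μ, p ≤ μ[fun ω => δ ω k | m] ω) :
    p * ∫ ω, ‖G ω‖ ^ 2 ∂μ ≤ ∫ ω, ∑ k, δ ω k * G ω k ^ 2 ∂μ := by
  have hGm : AEStronglyMeasurable G μ := (hG.mono hm).aestronglyMeasurable
  have hcoord : ∀ k, StronglyMeasurable[m] fun ω => G ω k ^ 2 := fun k =>
    ((EuclideanSpace.proj k).continuous.comp_stronglyMeasurable hG).pow 2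
  have hcoord_int := integrable_apply_sq_of_integrable_norm_sq hGm hGi
  have hmask_int := integrable_mask_mul_apply_sq hGm hGi hδm h01
  calc p * ∫ ω, ‖G ω‖ ^ 2 ∂μ = ∑ k, p * ∫ ω, G ω k ^ 2 ∂μ := by
        simp_rw [EuclideanSpace.real_norm_sq_eq]
        rw [integral_finsetSum _ fun k _ => hcoord_int k, mul_sum]
    _ ≤ ∑ k, ∫ ω, δ ω k * G ω k ^ 2 ∂μ := sum_le_sum fun k _ =>
        mul_integral_le_integral_mul_of_le_condExp hm (hcoord k)
          (.of_forall fun ω => sq_nonneg _) (hcoord_int k)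
          (.of_bound (hδm k) 1 (ae_norm_le_one_of_ae_eq_zero_or_one (h01 k))) (hmask_int k) (hp k)
    _ = ∫ ω, ∑ k, δ ω k * G ω k ^ 2 ∂μ := (integral_finsetSum _ fun k _ => hmask_int k).symm

theorem integral_masked_gradient_step_le [IsFiniteMeasure μ] (hm : m ≤ m0)
    {C : EuclideanSpace ℝ (Fin d) → ℝ} {L η p : ℝ} (hdiff : Differentiable ℝ C)
    (hlip : ∀ x y, ‖gradient C x - gradient C y‖ ≤ L * ‖x - y‖)
    {X Y : Ω → EuclideanSpace ℝ (Fin d)} (hX : StronglyMeasurable[m] X)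
    (hCX : Integrable (fun ω => C (X ω)) μ) (hCY : Integrable (fun ω => C (Y ω)) μ)
    (hgX : Integrable (fun ω => ‖gradient C (X ω)‖ ^ 2) μ)
    (hδm : ∀ k, AEStronglyMeasurable (fun ω => δ ω k) μ)
    (h01 : ∀ k, ∀ᵐ ω ∂μ, δ ω k = 0 ∨ δ ω k = 1)
    (hp : ∀ k, ∀ᵐ ω ∂μ, p ≤ μ[fun ω => δ ω k | m] ω) (hη : 0 ≤ η - L * η ^ 2 / 2)
    (hY : ∀ᵐ ω ∂μ, Y ω = X ω - η • maskMul (δ ω) (gradient C (X ω))) :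
    ∫ ω, C (Y ω) ∂μ
      ≤ ∫ ω, C (X ω) ∂μ - (η - L * η ^ 2 / 2) * p * ∫ ω, ‖gradient C (X ω)‖ ^ 2 ∂μ := by
  have hG : StronglyMeasurable[m] fun ω => gradient C (X ω) :=
    (LipschitzWith.of_dist_le' fun a b => by simpa [dist_eq_norm] using hlip a b).continuous
      |>.comp_stronglyMeasurable hX
  set S : Ω → ℝ := fun ω => ∑ k, δ ω k * gradient C (X ω) k ^ 2
  have hS : Integrable S μ := integrable_finsetSum _ fun k _ =>
    integrable_mask_mul_apply_sq (hG.mono hm).aestronglyMeasurable hgX hδm h01 k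
  have hdesc : ∀ᵐ ω ∂μ, C (Y ω) ≤ C (X ω) - (η - L * η ^ 2 / 2) * S ω := by
    filter_upwards [hY, ae_all_iff.2 h01] with ω hYω hδω
    rw [hYω]
    exact apply_sub_smul_maskMul_gradient_le hdiff hlip hδω (X ω) η
  have henergy := mul_integral_norm_sq_le_integral_sum_mask_mul_sq hm hG hgX hδm h01 hp
  calc ∫ ω, C (Y ω) ∂μ ≤ ∫ ω, C (X ω) - (η - L * η ^ 2 / 2) * S ω ∂μ :=
        integral_mono_ae hCY (hCX.sub (hS.const_mul _)) hdesc
    _ = ∫ ω, C (X ω) ∂μ - (η - L * η ^ 2 / 2) * ∫ ω, S ω ∂μ := by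
        rw [integral_sub hCX (hS.const_mul _), integral_const_mul]
    _ ≤ _ := by
        rw [mul_assoc]
        gcongr

end MaskedStep

theorem tendsto_average_zero_of_le_sub_mul {a b : ℕ → ℝ} {c a₀ : ℝ} (hc : 0 < c)
    (hb : ∀ t, 0 ≤ b t) (ha : ∀ t, a₀ ≤ a t) (hab : ∀ t, a (t + 1) ≤ a t - c * b t) :
    Tendsto (fun T : ℕ => 1 / (T : ℝ) * ∑ t ∈ range T, b t) atTop (nhds 0) := by
  have htelescope : ∀ T, c * ∑ t ∈ range T, b t ≤ a 0 - a T := by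
    intro T
    induction T with
    | zero => simp
    | succ T ih =>
      rw [sum_range_succ, mul_add]
      linarith [hab T]
  have hbound : ∀ T, ∑ t ∈ range T, b t ≤ (a 0 - a₀) / c := fun T => by
    rw [le_div_iff₀' hc]
    linarith [htelescope T, ha T]
  refine squeeze_zero (fun T => mul_nonneg (by positivity) (sum_nonneg fun t _ => hb t))
    (fun T => ?_) (tendsto_const_div_atTop_nhds_zero_nat ((a 0 - a₀) / c))
  rw [one_div_mul_eq_div]
  exact div_le_div_of_nonneg_right (hbound T) T.cast_nonneg
/-- **Convergence of WSBD-SGD.** Let `C : ℝ^d → ℝ` be `L`-smooth and bounded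
below by `C*`. Let `(ℱ_t)` be a filtration, `(θ^t)` adapted random vectors with `C(θ^t)` and
`‖∇C(θ^t)‖²` integrable, and `(δ^t)` random freezing masks (coordinates in `{0,1}` a.s.) with
`E[δ^t_k | ℱ_t] ≥ p_min > 0` a.s. If `θ^{t+1} = θ^t − η (δ^t ⊙ ∇C(θ^t))` a.s., with `η > 0`
and `p_min > Lη/2`, then `(1/T) Σ_{t<T} E[‖∇C(θ^t)‖²] → 0` as `T → ∞`. -/
theorem wsbd_sgd_convergence {Ω : Type*} {m0 : MeasurableSpace Ω}
    (μ : Measure Ω) [IsProbabilityMeasure μ] {d : ℕ} (hd : 0 < d)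
    (C : EuclideanSpace ℝ (Fin d) → ℝ) (L Cstar : ℝ)
    (hdiff : Differentiable ℝ C)
    (hlip : ∀ x y, ‖gradient C x - gradient C y‖ ≤ L * ‖x - y‖)
    (hbdd : ∀ x, Cstar ≤ C x)
    (ℱ : Filtration ℕ m0)
    (θ : ℕ → Ω → EuclideanSpace ℝ (Fin d))
    (hadapt : ∀ t, StronglyMeasurable[ℱ t] (θ t))
    (hCint : ∀ t, Integrable (fun ω => C (θ t ω)) μ)
    (hgint : ∀ t, Integrable (fun ω => ‖gradient C (θ t ω)‖ ^ 2) μ)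
    (δ : ℕ → Ω → Fin d → ℝ)
    (hδmeas : ∀ t k, Measurable fun ω => δ t ω k)
    (h01 : ∀ t k, ∀ᵐ ω ∂μ, δ t ω k = 0 ∨ δ t ω k = 1)
    (pmin : ℝ) (hpmin : 0 < pmin)
    (hcond : ∀ t k, ∀ᵐ ω ∂μ, pmin ≤ (μ[fun ω' => δ t ω' k | ℱ t]) ω)
    (η : ℝ) (hη : 0 < η) (hstep : L * η / 2 < pmin)
    (hupdate : ∀ t, ∀ᵐ ω ∂μ,
      θ (t + 1) ω = θ t ω - η • (WithLp.equiv 2 (Fin d → ℝ)).symm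
        (fun k => δ t ω k * gradient C (θ t ω) k)) :
    Tendsto (fun T : ℕ =>
        (1 / (T : ℝ)) * ∑ t ∈ Finset.range T, ∫ ω, ‖gradient C (θ t ω)‖ ^ 2 ∂μ)
      atTop (nhds 0) := by
  have hmask_le_one : ∀ᵐ ω ∂μ, ‖δ 0 ω ⟨0, hd⟩‖ ≤ 1 := ae_norm_le_one_of_ae_eq_zero_or_one (h01 0 _)
  have hpmin_le_one : pmin ≤ 1 :=
    le_of_le_condExp (ℱ.le 0) (.of_bound (hδmeas 0 _).aestronglyMeasurable 1 hmask_le_one)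
      (by filter_upwards [hmask_le_one] with ω h using (le_abs_self _).trans h) (hcond 0 _)
  have hgain : 0 < η - L * η ^ 2 / 2 := by
    nlinarith [mul_pos hη (sub_pos.2 (hstep.trans_le hpmin_le_one))]
  refine tendsto_average_zero_of_le_sub_mul (a := fun t => ∫ ω, C (θ t ω) ∂μ) (a₀ := Cstar)
    (mul_pos hgain hpmin) (fun t => integral_nonneg fun ω => sq_nonneg _) (fun t => ?_)
    (fun t => ?_)
  · simpa using integral_mono (integrable_const Cstar) (hCint t) fun ω => hbdd (θ t ω)
  · exact integral_masked_gradient_step_le (ℱ.le t) hdiff hlip (hadapt t) (hCint t)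
      (hCint (t + 1)) (hgint t) (fun k => (hδmeas t k).aestronglyMeasurable) (h01 t) (hcond t)
      hgain.le (hupdate t)
end

section
/- (General WSBD framework, convergence to stationarity.) Let C : ℝ^d → ℝ be L-smooth and bounded below by C*. Let (F_t)_{t≥0} be a filtration, (θ^t)_{t≥0} random vectors with θ^t F_t-measurable, (u_t)_{t≥0} random vectors in ℝ^d, and (δ^t)_{t≥0} random freezing masks, with C(θ^t), ‖∇C(θ^t)‖², and ‖u_t‖² integrable for every t. Suppose there are constants c > 0 and K ≥ 0 such that, almost surely for every t, E[⟨∇C(θ^t), δ^t ⊙ u_t⟩ | F_t] ≥ c ‖∇C(θ^t)‖² and E[‖u_t‖² | F_t] ≤ K, suppose θ^{t+1} = θ^t − η_t (δ^t ⊙ u_t) almost surely, and suppose the step sizes η_t > 0 satisfy Σ_t η_t = ∞ and Σ_t η_t² < ∞. Then liminf_{t→∞} E[‖∇C(θ^t)‖²] = 0. -/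
open MeasureTheory Filter
open scoped RealInnerProductSpace NNReal

/-!
Integrating the descent lemma `C y ≤ C x + ⟪∇C x, y - x⟫ + L/2 ‖y - x‖²` along the update
`θ^{t+1} = θ^t - η_t (δ^t ⊙ u_t)`, and conditioning on `ℱ_t`, gives
`E C(θ^{t+1}) ≤ E C(θ^t) - c η_t E‖∇C(θ^t)‖² + L K η_t² / 2`, since a 0/1 mask does not increase
norms. Telescoping against `C ≥ C*` with `Σ η_t² < ∞` makes `Σ η_t E‖∇C(θ^t)‖²` finite. If
`E‖∇C(θ^t)‖²` stayed eventually above some `a > 0`, then `Σ η_t` would be finite as well.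
-/

theorem LipschitzWith.le_add_inner_gradient_add_sq {E : Type*} [NormedAddCommGroup E]
    [InnerProductSpace ℝ E] [CompleteSpace E] {f : E → ℝ} {L : ℝ≥0}
    (hf : Differentiable ℝ f) (hL : LipschitzWith L (gradient f)) (x y : E) :
    f y ≤ f x + ⟪gradient f x, y - x⟫ + L / 2 * ‖y - x‖ ^ 2 := by
  set v := y - x
  let φ : ℝ → ℝ := fun s => f (x + s • v) - s * ⟪gradient f x, v⟫ - L / 2 * s ^ 2 * ‖v‖ ^ 2
  have hφ : ∀ s,
      HasDerivAt φ (⟪gradient f (x + s • v) - gradient f x, v⟫ - L * s * ‖v‖ ^ 2) s := by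
    intro s
    have hline : HasDerivAt (fun s : ℝ => x + s • v) v s := by
      simpa using ((hasDerivAt_id s).smul_const v).const_add x
    have hfline := (hf _).hasGradientAt.hasFDerivAt.comp_hasDerivAt s hline
    rw [InnerProductSpace.toDual_apply_apply] at hfline
    refine ((hfline.sub ((hasDerivAt_id s).mul_const ⟪gradient f x, v⟫)).sub
      (((hasDerivAt_pow 2 s).const_mul (L / 2 : ℝ)).mul_const (‖v‖ ^ 2))).congr_deriv ?_
    rw [inner_sub_left]
    push_cast
    ring
  have hφ'_nonpos : ∀ s, 0 ≤ s →
      ⟪gradient f (x + s • v) - gradient f x, v⟫ - L * s * ‖v‖ ^ 2 ≤ 0 := by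
    intro s hs
    have hgrad : ‖gradient f (x + s • v) - gradient f x‖ ≤ L * (s * ‖v‖) := by
      simpa [← dist_eq_norm, norm_smul, abs_of_nonneg hs] using hL.dist_le_mul (x + s • v) x
    refine sub_nonpos.2 ?_
    calc ⟪gradient f (x + s • v) - gradient f x, v⟫
        ≤ ‖gradient f (x + s • v) - gradient f x‖ * ‖v‖ := real_inner_le_norm _ _
      _ ≤ L * (s * ‖v‖) * ‖v‖ := by gcongr
      _ = L * s * ‖v‖ ^ 2 := by ring
  have hanti : AntitoneOn φ (Set.Ici 0) :=
    antitoneOn_of_hasDerivWithinAt_nonpos (convex_Ici 0)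
      (fun s _ => (hφ s).continuousAt.continuousWithinAt)
      (fun s _ => (hφ s).hasDerivWithinAt) (fun s hs => hφ'_nonpos s (interior_subset hs))
  have hφ01 : φ 1 ≤ φ 0 := hanti Set.self_mem_Ici (Set.mem_Ici.2 zero_le_one) zero_le_one
  simp only [φ, v, one_smul, zero_smul, add_zero, add_sub_cancel] at hφ01
  linarith

theorem integrable_inner_of_integrable_sq_norm {Ω E : Type*} {m0 : MeasurableSpace Ω}
    {μ : Measure Ω} [NormedAddCommGroup E] [InnerProductSpace ℝ E] {F V : Ω → E}
    (hF : AEStronglyMeasurable F μ) (hV : AEStronglyMeasurable V μ)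
    (hF2 : Integrable (fun ω => ‖F ω‖ ^ 2) μ) (hV2 : Integrable (fun ω => ‖V ω‖ ^ 2) μ) :
    Integrable (fun ω => ⟪F ω, V ω⟫) μ := by
  refine (hF2.add hV2).mono' (hF.inner hV) (Eventually.of_forall fun ω => ?_)
  simp only [Pi.add_apply, Real.norm_eq_abs]
  nlinarith [abs_real_inner_le_norm (F ω) (V ω), sq_nonneg (‖F ω‖ - ‖V ω‖)]

theorem integral_le_sub_inner_gradient_add_sq {Ω E : Type*} {m0 : MeasurableSpace Ω}
    {μ : Measure Ω} [NormedAddCommGroup E] [InnerProductSpace ℝ E] [CompleteSpace E]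
    {f : E → ℝ} {L : ℝ≥0}
    (hf : Differentiable ℝ f) (hL : LipschitzWith L (gradient f)) {x y v : Ω → E} {η : ℝ}
    (hy : ∀ᵐ ω ∂μ, y ω = x ω - η • v ω) (hfx : Integrable (fun ω => f (x ω)) μ)
    (hfy : Integrable (fun ω => f (y ω)) μ)
    (hinner : Integrable (fun ω => ⟪gradient f (x ω), v ω⟫) μ)
    (hv : Integrable (fun ω => ‖v ω‖ ^ 2) μ) :
    ∫ ω, f (y ω) ∂μ ≤ ∫ ω, f (x ω) ∂μ - η * ∫ ω, ⟪gradient f (x ω), v ω⟫ ∂μ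
      + L / 2 * η ^ 2 * ∫ ω, ‖v ω‖ ^ 2 ∂μ := by
  have hpointwise : ∀ᵐ ω ∂μ, f (y ω) ≤
      f (x ω) - η * ⟪gradient f (x ω), v ω⟫ + L / 2 * η ^ 2 * ‖v ω‖ ^ 2 := by
    filter_upwards [hy] with ω hω
    have := hL.le_add_inner_gradient_add_sq hf (x ω) (y ω)
    rw [hω] at this ⊢
    rw [sub_sub_cancel_left, inner_neg_right, inner_smul_right, norm_neg, norm_smul,
      Real.norm_eq_abs, mul_pow, sq_abs] at this
    linarith
  have hdescent : Integrable (fun ω => f (x ω) - η * ⟪gradient f (x ω), v ω⟫) μ :=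
    hfx.sub (hinner.const_mul η)
  calc ∫ ω, f (y ω) ∂μ
      ≤ ∫ ω, (f (x ω) - η * ⟪gradient f (x ω), v ω⟫ + L / 2 * η ^ 2 * ‖v ω‖ ^ 2) ∂μ :=
        integral_mono_ae hfy (hdescent.add (hv.const_mul _)) hpointwise
    _ = _ := by
      rw [integral_add hdescent (hv.const_mul _), integral_sub hfx (hinner.const_mul η),
        integral_const_mul, integral_const_mul]

theorem integral_le_integral_of_le_condExp {Ω : Type*} {m m0 : MeasurableSpace Ω}
    {μ : Measure Ω} (hm : m ≤ m0) [SigmaFinite (μ.trim hm)] {f g : Ω → ℝ}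
    (hf : Integrable f μ) (hfg : f ≤ᵐ[μ] μ[g|m]) : ∫ ω, f ω ∂μ ≤ ∫ ω, g ω ∂μ :=
  (integral_mono_ae hf integrable_condExp hfg).trans_eq (integral_condExp hm)

theorem integral_le_of_condExp_le {Ω : Type*} {m m0 : MeasurableSpace Ω}
    {μ : Measure Ω} [IsProbabilityMeasure μ] (hm : m ≤ m0) {g : Ω → ℝ} {K : ℝ}
    (hgK : ∀ᵐ ω ∂μ, μ[g|m] ω ≤ K) : ∫ ω, g ω ∂μ ≤ K := by
  rw [← integral_condExp hm]
  simpa using integral_mono_ae integrable_condExp (integrable_const K) hgK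

theorem EuclideanSpace.norm_mul_le {ι : Type*} [Fintype ι] {δ : ι → ℝ}
    (hδ : ∀ k, |δ k| ≤ 1) (x : EuclideanSpace ℝ ι) :
    ‖(WithLp.equiv 2 (ι → ℝ)).symm (fun k => δ k * x k)‖ ≤ ‖x‖ := by
  rw [EuclideanSpace.norm_eq, EuclideanSpace.norm_eq]
  refine Real.sqrt_le_sqrt (Finset.sum_le_sum fun k _ => ?_)
  simp only [WithLp.equiv_symm_apply, PiLp.toLp_apply, Real.norm_eq_abs, abs_mul]
  gcongr
  exact mul_le_of_le_one_left (abs_nonneg _) (hδ k)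

theorem EuclideanSpace.measurable_mul {Ω ι : Type*} [Fintype ι] {m0 : MeasurableSpace Ω}
    {δ : Ω → ι → ℝ} {x : Ω → EuclideanSpace ℝ ι} (hδ : ∀ k, Measurable fun ω => δ ω k)
    (hx : Measurable x) :
    Measurable fun ω => (WithLp.equiv 2 (ι → ℝ)).symm (fun k => δ ω k * x ω k) :=
  (WithLp.measurable_toLp 2 _).comp <| measurable_pi_lambda _ fun k =>
    (hδ k).mul ((measurable_pi_apply k).comp ((WithLp.measurable_ofLp 2 _).comp hx))

theorem integral_le_of_masked_step {Ω ι : Type*} [Fintype ι] {m m0 : MeasurableSpace Ω}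
    {μ : Measure Ω} [IsProbabilityMeasure μ] (hm : m ≤ m0) {f : EuclideanSpace ℝ ι → ℝ}
    {L : ℝ≥0} (hf : Differentiable ℝ f) (hL : LipschitzWith L (gradient f))
    {x y u : Ω → EuclideanSpace ℝ ι} {δ : Ω → ι → ℝ} {η c K : ℝ} (hη : 0 ≤ η)
    (hx : Measurable x) (hu : Measurable u) (hδ : ∀ k, Measurable fun ω => δ ω k)
    (hδ01 : ∀ k, ∀ᵐ ω ∂μ, δ ω k = 0 ∨ δ ω k = 1)
    (hfx : Integrable (fun ω => f (x ω)) μ) (hfy : Integrable (fun ω => f (y ω)) μ)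
    (hgx : Integrable (fun ω => ‖gradient f (x ω)‖ ^ 2) μ)
    (hu2 : Integrable (fun ω => ‖u ω‖ ^ 2) μ)
    (hcorr : ∀ᵐ ω ∂μ, c * ‖gradient f (x ω)‖ ^ 2 ≤
      μ[fun ω' => ⟪gradient f (x ω'), (WithLp.equiv 2 (ι → ℝ)).symm (fun k => δ ω' k * u ω' k)⟫
        | m] ω)
    (hbound : ∀ᵐ ω ∂μ, μ[fun ω' => ‖u ω'‖ ^ 2 | m] ω ≤ K)
    (hy : ∀ᵐ ω ∂μ, y ω = x ω - η • (WithLp.equiv 2 (ι → ℝ)).symm (fun k => δ ω k * u ω k)) :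
    ∫ ω, f (y ω) ∂μ ≤
      ∫ ω, f (x ω) ∂μ - c * (η * ∫ ω, ‖gradient f (x ω)‖ ^ 2 ∂μ) + L / 2 * K * η ^ 2 := by
  set v : Ω → EuclideanSpace ℝ ι := fun ω =>
    (WithLp.equiv 2 (ι → ℝ)).symm (fun k => δ ω k * u ω k)
  have hv : Measurable v := EuclideanSpace.measurable_mul hδ hu
  have hvu : ∀ᵐ ω ∂μ, ‖v ω‖ ^ 2 ≤ ‖u ω‖ ^ 2 := by
    filter_upwards [ae_all_iff.2 hδ01] with ω hω
    gcongr
    exact EuclideanSpace.norm_mul_le (fun k => by rcases hω k with h | h <;> simp [h]) _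
  have hv2 : Integrable (fun ω => ‖v ω‖ ^ 2) μ :=
    hu2.mono' (hv.norm.pow_const 2).aestronglyMeasurable <| by
      filter_upwards [hvu] with ω h
      rwa [Real.norm_of_nonneg (by positivity)]
  have hinner : Integrable (fun ω => ⟪gradient f (x ω), v ω⟫) μ :=
    integrable_inner_of_integrable_sq_norm (hL.continuous.measurable.comp hx).aestronglyMeasurable
      hv.aestronglyMeasurable hgx hv2
  have hinner_ge : c * ∫ ω, ‖gradient f (x ω)‖ ^ 2 ∂μ ≤ ∫ ω, ⟪gradient f (x ω), v ω⟫ ∂μ := by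
    rw [← integral_const_mul]
    exact integral_le_integral_of_le_condExp hm (hgx.const_mul c) hcorr
  have hv2_le : ∫ ω, ‖v ω‖ ^ 2 ∂μ ≤ K :=
    (integral_mono_ae hv2 hu2 hvu).trans (integral_le_of_condExp_le hm hbound)
  have hdescent := integral_le_sub_inner_gradient_add_sq hf hL hy hfx hfy hinner hv2
  have hfirst_order := mul_le_mul_of_nonneg_left hinner_ge hη
  have hsecond_order := mul_le_mul_of_nonneg_left hv2_le
    (by positivity : (0 : ℝ) ≤ L / 2 * η ^ 2)
  linarith

theorem summable_mul_of_le_sub_mul_add {a g η b : ℕ → ℝ} {c m : ℝ} (hc : 0 < c)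
    (ha : ∀ t, m ≤ a t) (hg : ∀ t, 0 ≤ g t) (hη : ∀ t, 0 ≤ η t) (hb : Summable b)
    (hb0 : ∀ t, 0 ≤ b t) (hstep : ∀ t, a (t + 1) ≤ a t - c * (η t * g t) + b t) :
    Summable fun t => η t * g t := by
  have htelescope : ∀ T, c * ∑ t ∈ Finset.range T, η t * g t ≤
      a 0 - a T + ∑ t ∈ Finset.range T, b t := by
    intro T
    induction T with
    | zero => simp
    | succ T ih =>
      rw [Finset.sum_range_succ, Finset.sum_range_succ, mul_add]
      linarith [hstep T]
  refine summable_of_sum_range_le (c := (a 0 - m + ∑' t, b t) / c)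
    (fun t => mul_nonneg (hη t) (hg t)) fun T => ?_
  rw [le_div_iff₀' hc]
  linarith [htelescope T, ha T, hb.sum_le_tsum (Finset.range T) fun t _ => hb0 t]

theorem liminf_eq_zero_of_summable_mul {g η : ℕ → ℝ} (hg : ∀ t, 0 ≤ g t) (hη : ∀ t, 0 ≤ η t)
    (hdiv : Tendsto (fun T => ∑ t ∈ Finset.range T, η t) atTop atTop)
    (hsum : Summable fun t => η t * g t) : liminf g atTop = 0 := by
  have not_eventually_le : ∀ a > 0, ¬ ∀ᶠ t in atTop, a ≤ g t := by
    intro a ha hev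
    have hη_sum : Summable η := by
      refine (summable_mul_right_iff ha.ne').1 (hsum.of_norm_bounded_eventually_nat ?_)
      filter_upwards [hev] with t ht
      rw [Real.norm_of_nonneg (mul_nonneg (hη t) ha.le)]
      exact mul_le_mul_of_nonneg_left ht (hη t)
    exact not_tendsto_atTop_of_tendsto_nhds hη_sum.hasSum.tendsto_sum_nat hdiv
  have hlower : {a | ∀ᶠ t in atTop, a ≤ g t} = Set.Iic 0 := by
    ext a
    exact ⟨fun ha => not_lt.1 fun hpos => not_eventually_le a hpos ha,
      fun ha => Eventually.of_forall fun t => (Set.mem_Iic.1 ha).trans (hg t)⟩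
  rw [liminf_eq, hlower, csSup_Iic]

theorem wsbd_general_convergence_general {Ω : Type*} {m0 : MeasurableSpace Ω}
    (μ : Measure Ω) [IsProbabilityMeasure μ] {d : ℕ}
    (C : EuclideanSpace ℝ (Fin d) → ℝ) (L Cstar : ℝ)
    (hdiff : Differentiable ℝ C)
    (hlip : ∀ x y, ‖gradient C x - gradient C y‖ ≤ L * ‖x - y‖)
    (hbdd : ∀ x, Cstar ≤ C x)
    (ℱ : Filtration ℕ m0)
    (θ : ℕ → Ω → EuclideanSpace ℝ (Fin d))
    (hadapt : ∀ t, StronglyMeasurable[ℱ t] (θ t))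
    (u : ℕ → Ω → EuclideanSpace ℝ (Fin d))
    (humeas : ∀ t, Measurable (u t))
    (δ : ℕ → Ω → Fin d → ℝ)
    (hδmeas : ∀ t k, Measurable fun ω => δ t ω k)
    (h01 : ∀ t k, ∀ᵐ ω ∂μ, δ t ω k = 0 ∨ δ t ω k = 1)
    (hCint : ∀ t, Integrable (fun ω => C (θ t ω)) μ)
    (hgint : ∀ t, Integrable (fun ω => ‖gradient C (θ t ω)‖ ^ 2) μ)
    (huint : ∀ t, Integrable (fun ω => ‖u t ω‖ ^ 2) μ)
    (c K : ℝ) (hc : 0 < c)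
    (hdescent : ∀ t, ∀ᵐ ω ∂μ,
      c * ‖gradient C (θ t ω)‖ ^ 2 ≤
        (μ[fun ω' => ⟪gradient C (θ t ω'),
            (WithLp.equiv 2 (Fin d → ℝ)).symm (fun k => δ t ω' k * u t ω' k)⟫ | ℱ t]) ω)
    (hbound : ∀ t, ∀ᵐ ω ∂μ, (μ[fun ω' => ‖u t ω'‖ ^ 2 | ℱ t]) ω ≤ K)
    (η : ℕ → ℝ) (hη : ∀ t, 0 < η t)
    (hdiv : Tendsto (fun T => ∑ t ∈ Finset.range T, η t) atTop atTop)
    (hsq : Summable fun t => η t ^ 2)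
    (hupdate : ∀ t, ∀ᵐ ω ∂μ,
      θ (t + 1) ω = θ t ω - η t • (WithLp.equiv 2 (Fin d → ℝ)).symm
        (fun k => δ t ω k * u t ω k)) :
    liminf (fun t => ∫ ω, ‖gradient C (θ t ω)‖ ^ 2 ∂μ) atTop = 0 := by
  have hgrad : LipschitzWith L.toNNReal (gradient C) := .of_dist_le_mul fun x y => by
    simpa only [dist_eq_norm] using (hlip x y).trans (by gcongr; exact L.le_coe_toNNReal)
  have hstep : ∀ t, ∫ ω, C (θ (t + 1) ω) ∂μ ≤ ∫ ω, C (θ t ω) ∂μ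
      - c * (η t * ∫ ω, ‖gradient C (θ t ω)‖ ^ 2 ∂μ) + L.toNNReal / 2 * K * η t ^ 2 :=
    fun t => integral_le_of_masked_step (ℱ.le t) hdiff hgrad (hη t).le
      ((hadapt t).mono (ℱ.le t)).measurable (humeas t) (hδmeas t) (h01 t) (hCint t)
      (hCint (t + 1)) (hgint t) (huint t) (hdescent t) (hbound t) (hupdate t)
  have hK : 0 ≤ K :=
    (integral_nonneg fun ω => by positivity).trans (integral_le_of_condExp_le (ℱ.le 0) (hbound 0))
  have hC_ge : ∀ t, Cstar ≤ ∫ ω, C (θ t ω) ∂μ := fun t => by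
    simpa using integral_mono (integrable_const Cstar) (hCint t) fun ω => hbdd _
  have hgrad_nonneg : ∀ t, 0 ≤ ∫ ω, ‖gradient C (θ t ω)‖ ^ 2 ∂μ := fun t =>
    integral_nonneg fun ω => by positivity
  exact liminf_eq_zero_of_summable_mul hgrad_nonneg (fun t => (hη t).le) hdiv
    (summable_mul_of_le_sub_mul_add hc hC_ge hgrad_nonneg (fun t => (hη t).le)
      (hsq.mul_left (L.toNNReal / 2 * K)) (fun t => by positivity) hstep)

/-- **General WSBD framework, convergence to stationarity.** Under the general
WSBD assumptions (`C` `L`-smooth and bounded below by `C*`; `(θ^t)` adapted; masks `(δ^t)`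
with coordinates in `{0,1}` a.s.; `C(θ^t)`, `‖∇C(θ^t)‖²`, `‖u_t‖²` integrable;
`E[⟨∇C(θ^t), δ^t ⊙ u_t⟩ | ℱ_t] ≥ c ‖∇C(θ^t)‖²` and `E[‖u_t‖² | ℱ_t] ≤ K` a.s.;
`θ^{t+1} = θ^t − η_t (δ^t ⊙ u_t)` a.s.), if the step sizes `η_t > 0` satisfy `Σ η_t = ∞`
and `Σ η_t² < ∞`, then `liminf_{t→∞} E[‖∇C(θ^t)‖²] = 0`. -/
theorem wsbd_general_convergence {Ω : Type*} {m0 : MeasurableSpace Ω}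
    (μ : Measure Ω) [IsProbabilityMeasure μ] {d : ℕ} (hd : 0 < d)
    (C : EuclideanSpace ℝ (Fin d) → ℝ) (L Cstar : ℝ)
    (hdiff : Differentiable ℝ C)
    (hlip : ∀ x y, ‖gradient C x - gradient C y‖ ≤ L * ‖x - y‖)
    (hbdd : ∀ x, Cstar ≤ C x)
    (ℱ : Filtration ℕ m0)
    (θ : ℕ → Ω → EuclideanSpace ℝ (Fin d))
    (hadapt : ∀ t, StronglyMeasurable[ℱ t] (θ t))
    (u : ℕ → Ω → EuclideanSpace ℝ (Fin d))
    (humeas : ∀ t, Measurable (u t))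
    (δ : ℕ → Ω → Fin d → ℝ)
    (hδmeas : ∀ t k, Measurable fun ω => δ t ω k)
    (h01 : ∀ t k, ∀ᵐ ω ∂μ, δ t ω k = 0 ∨ δ t ω k = 1)
    (hCint : ∀ t, Integrable (fun ω => C (θ t ω)) μ)
    (hgint : ∀ t, Integrable (fun ω => ‖gradient C (θ t ω)‖ ^ 2) μ)
    (huint : ∀ t, Integrable (fun ω => ‖u t ω‖ ^ 2) μ)
    (c K : ℝ) (hc : 0 < c) (hK : 0 ≤ K)
    (hdescent : ∀ t, ∀ᵐ ω ∂μ,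
      c * ‖gradient C (θ t ω)‖ ^ 2 ≤
        (μ[fun ω' => ⟪gradient C (θ t ω'),
            (WithLp.equiv 2 (Fin d → ℝ)).symm (fun k => δ t ω' k * u t ω' k)⟫ | ℱ t]) ω)
    (hbound : ∀ t, ∀ᵐ ω ∂μ, (μ[fun ω' => ‖u t ω'‖ ^ 2 | ℱ t]) ω ≤ K)
    (η : ℕ → ℝ) (hη : ∀ t, 0 < η t)
    (hdiv : Tendsto (fun T => ∑ t ∈ Finset.range T, η t) atTop atTop)
    (hsq : Summable fun t => η t ^ 2)
    (hupdate : ∀ t, ∀ᵐ ω ∂μ,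
      θ (t + 1) ω = θ t ω - η t • (WithLp.equiv 2 (Fin d → ℝ)).symm
        (fun k => δ t ω k * u t ω k)) :
    liminf (fun t => ∫ ω, ‖gradient C (θ t ω)‖ ^ 2 ∂μ) atTop = 0 :=
  wsbd_general_convergence_general μ C L Cstar hdiff hlip hbdd ℱ θ hadapt u humeas δ hδmeas h01
    hCint hgint huint c K hc hdescent hbound η hη hdiv hsq hupdate
end
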